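/- arXiv:quant-ph/0312157 — 3 statements merged into one kernel-verified Lean document; each statement's English description precedes it below -/
import Mathlib

section
/- If a likelihood ordering on quantum events satisfies transitivity, dominance, and equivalence, and the set of measurements is weight-rich, then whenever the weight of event E under measurement M is at least the weight of event F under measurement N, we have E|M ≿ F|N. -/
/-- A quantum measurement: a finite outcome set with an additive,
normalized, nonnegative weight function on events (subsets of outcomes). -/
structure Measurement where
  S : Finset ℕ
  W : Finset ℕ → ℝ
  nonneg : ∀ E, 0 ≤ W E
  emptyW : W ∅ = 0
  totalW : W S = 1
  addW : ∀ E F : Finset ℕ, E ⊆ S → F ⊆ S → Disjoint E F → W (E ∪ F) = W E + W F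

/-- A likelihood ordering on event–measurement pairs. -/
abbrev LOrder := (Finset ℕ × Measurement) → (Finset ℕ × Measurement) → Prop

/-- E|M ≃ F|N : both directions of the likelihood ordering hold. -/
def lequiv (R : LOrder) (a b : Finset ℕ × Measurement) : Prop := R a b ∧ R b a

/-- E is null with respect to M. -/
def IsNull (R : LOrder) (E : Finset ℕ) (M : Measurement) : Prop := lequiv R (E, M) (∅, M)

/-- Transitivity axiom. -/
def TransAx (R : LOrder) : Prop := ∀ a b c, R a b → R b c → R a c

/-- Dominance axiom. -/
def DominanceAx (R : LOrder) : Prop :=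
  ∀ (M : Measurement) (E F : Finset ℕ), E ⊆ F → F ⊆ M.S →
    R (F, M) (E, M) ∧ (lequiv R (F, M) (E, M) ↔ IsNull R (F \ E) M)

/-- Separation axiom: some event is not null. -/
def SeparationAx (R : LOrder) : Prop :=
  ∃ (E : Finset ℕ) (M : Measurement), E ⊆ M.S ∧ ¬ IsNull R E M

/-- Equivalence axiom: equal weight implies equal likelihood. -/
def EquivalenceAx (R : LOrder) : Prop :=
  ∀ (M N : Measurement) (E F : Finset ℕ), E ⊆ M.S → F ⊆ N.S →
    M.W E = N.W F → lequiv R (E, M) (F, N)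

/-- Weight-richness: every finite list of positive reals summing to 1 is
realized as the singleton-outcome weights of some measurement. -/
def Rich : Prop :=
  ∀ (n : ℕ) (w : Fin n → ℝ), (∀ i, 0 < w i) → (∑ i, w i) = 1 →
    ∃ (M : Measurement) (e : Fin n ↪ ℕ),
      M.S = Finset.univ.map e ∧ ∀ i, M.W {e i} = w i

/-- `Pr` represents the likelihood ordering `R`. -/
def Represents (R : LOrder) (Pr : Finset ℕ × Measurement → ℝ) : Prop :=
  (∀ M : Measurement, Pr (∅, M) = 0) ∧
  (∀ M : Measurement, Pr (M.S, M) = 1) ∧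
  (∀ (M : Measurement) (E F : Finset ℕ), E ⊆ M.S → F ⊆ M.S → Disjoint E F →
      Pr (E ∪ F, M) = Pr (E, M) + Pr (F, M)) ∧
  (∀ a b : Finset ℕ × Measurement, a.1 ⊆ a.2.S → b.1 ⊆ b.2.S →
      (Pr a ≥ Pr b ↔ R a b))

theorem weight_le_one (M : Measurement) (E : Finset ℕ) (hEM : E ⊆ M.S) : M.W E ≤ 1 := by
  have h := M.addW E (M.S \ E) hEM (Finset.sdiff_subset) Finset.disjoint_sdiff
  rw [Finset.union_sdiff_of_subset hEM, M.totalW] at h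
  have := M.nonneg (M.S \ E)
  linarith

/-- Lemma 1: greater-or-equal weight implies at-least-as-likely. -/
theorem stmt0 (R : LOrder) (hT : TransAx R) (hD : DominanceAx R)
    (hE : EquivalenceAx R) (hR : Rich)
    (M N : Measurement) (E F : Finset ℕ) (hEM : E ⊆ M.S) (hFN : F ⊆ N.S)
    (hW : M.W E ≥ N.W F) : R (E, M) (F, N) := by
  rcases eq_or_lt_of_le hW with heq | hlt
  · exact (hE M N E F hEM hFN heq.symm).1
  · -- N.W F < M.W E
    rcases eq_or_lt_of_le (N.nonneg F) with hb0 | hbpos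
    · -- N.W F = 0
      have h1 : R (E, M) (∅, M) := (hD M ∅ E (Finset.empty_subset E) hEM).1
      have h2 : lequiv R ((∅ : Finset ℕ), M) ((∅ : Finset ℕ), N) :=
        hE M N ∅ ∅ (Finset.empty_subset _) (Finset.empty_subset _)
          (by rw [M.emptyW, N.emptyW])
      have h3 : lequiv R ((∅ : Finset ℕ), N) (F, N) :=
        hE N N ∅ F (Finset.empty_subset _) hFN (by rw [N.emptyW, ← hb0])
      exact hT _ _ _ (hT _ _ _ h1 h2.1) h3.1
    · -- 0 < N.W F
      set a := M.W E with ha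
      set b := N.W F with hb
      have hale : a ≤ 1 := weight_le_one M E hEM
      rcases eq_or_lt_of_le hale with ha1 | halt
      · -- a = 1 : use n = 2, weights (b, 1-b)
        obtain ⟨P, e, hS, hw⟩ := hR 2 ![b, 1 - b]
          (by intro i; fin_cases i <;> simp <;> linarith)
          (by simp [Fin.sum_univ_two])
        have hB : ({e 0} : Finset ℕ) ⊆ P.S := by
          rw [hS]; intro x hx
          simp only [Finset.mem_singleton] at hx
          simp [hx]
        have h1 : lequiv R (E, M) (P.S, P) :=
          hE M P E P.S hEM (le_refl _) (by rw [P.totalW, ← ha1])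
        have h2 : R (P.S, P) ({e 0}, P) := (hD P {e 0} P.S hB (le_refl _)).1
        have h3 : lequiv R (({e 0} : Finset ℕ), P) (F, N) :=
          hE P N {e 0} F hB hFN (by rw [hw 0]; simp [hb])
        exact hT _ _ _ (hT _ _ _ h1.1 h2) h3.1
      · -- b < a < 1 : use n = 3, weights (b, a-b, 1-a)
        obtain ⟨P, e, hS, hw⟩ := hR 3 ![b, a - b, 1 - a]
          (by intro i; fin_cases i <;> simp <;> linarith)
          (by simp [Fin.sum_univ_three])
        have hmem : ∀ i, e i ∈ P.S := by
          intro i; rw [hS]; simp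
        have hB : ({e 0} : Finset ℕ) ⊆ P.S := by
          intro x hx; simp only [Finset.mem_singleton] at hx; rw [hx]; exact hmem 0
        have hA : ({e 0, e 1} : Finset ℕ) ⊆ P.S := by
          intro x hx
          simp only [Finset.mem_insert, Finset.mem_singleton] at hx
          rcases hx with h | h <;> rw [h]
          exacts [hmem 0, hmem 1]
        have hne : e 0 ≠ e 1 := fun h => by simpa using e.injective h
        have hdisj : Disjoint ({e 0} : Finset ℕ) {e 1} := by
          simpa using hne
        have hB1 : ({e 1} : Finset ℕ) ⊆ P.S := by
          intro x hx; simp only [Finset.mem_singleton] at hx; rw [hx]; exact hmem 1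
        have hWA : P.W {e 0, e 1} = a := by
          have heq2 : ({e 0, e 1} : Finset ℕ) = {e 0} ∪ {e 1} := by
            rw [Finset.insert_eq]
          rw [heq2, P.addW {e 0} {e 1} hB hB1 hdisj, hw 0, hw 1]
          simp
        have hsub : ({e 0} : Finset ℕ) ⊆ {e 0, e 1} := by
          intro x hx; simp only [Finset.mem_singleton] at hx; simp [hx]
        have h1 : lequiv R (E, M) (({e 0, e 1} : Finset ℕ), P) :=
          hE M P E {e 0, e 1} hEM hA (by rw [hWA])
        have h2 : R (({e 0, e 1} : Finset ℕ), P) (({e 0} : Finset ℕ), P) :=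
          (hD P {e 0} {e 0, e 1} hsub hA).1
        have h3 : lequiv R (({e 0} : Finset ℕ), P) (F, N) :=
          hE P N {e 0} F hB hFN (by rw [hw 0]; simp [hb])
        exact hT _ _ _ (hT _ _ _ h1.1 h2) h3.1
end

section
/- If a likelihood ordering on quantum events satisfies transitivity, dominance, separation, and equivalence, and the set of measurements is weight-rich, then an event E is null with respect to M if and only if W_M(E) = 0. -/
/-! By Equivalence, whether an event is null depends only on its weight, and by Dominance null
events are closed under subevents and disjoint unions. Weight-richness provides, for any
`a, b > 0` with `a + b ≤ 1`, disjoint events of weights `a` and `b` in one measurement, so the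
weights of null events form a down-set closed under (bounded) addition. A null event of weight
`w > 0` would then make every weight `≤ n * w` null, hence every event, against Separation. -/

open Finset

theorem Measurement.W_le_one (M : Measurement) {E : Finset ℕ} (hE : E ⊆ M.S) : M.W E ≤ 1 := by
  have h := M.addW E (M.S \ E) hE sdiff_subset disjoint_sdiff
  rw [union_sdiff_of_subset hE, M.totalW] at h
  linarith [M.nonneg (M.S \ E)]

namespace lequiv

variable {R : LOrder} {a b c : Finset ℕ × Measurement}

theorem trans (hT : TransAx R) (hab : lequiv R a b) (hbc : lequiv R b c) : lequiv R a c :=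
  ⟨hT _ _ _ hab.1 hbc.1, hT _ _ _ hbc.2 hab.2⟩

end lequiv

section Null

variable {R : LOrder} {M N : Measurement} {A B G H : Finset ℕ}

theorem isNull_of_W_eq_zero (hE : EquivalenceAx R) (hG : G ⊆ N.S) (h0 : N.W G = 0) :
    IsNull R G N :=
  hE N N G ∅ hG (empty_subset _) (by rw [N.emptyW, h0])

theorem IsNull.of_W_eq (hT : TransAx R) (hE : EquivalenceAx R) (hG : IsNull R G N)
    (hGN : G ⊆ N.S) (hHM : H ⊆ M.S) (hw : M.W H = N.W G) : IsNull R H M :=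
  ((hE M N H G hHM hGN hw).trans hT hG).trans hT
    (hE N M ∅ ∅ (empty_subset _) (empty_subset _) (by rw [N.emptyW, M.emptyW]))

theorem IsNull.mono (hT : TransAx R) (hD : DominanceAx R) (hG : IsNull R G N) (hHG : H ⊆ G)
    (hGN : G ⊆ N.S) : IsNull R H N :=
  ⟨(hD N ∅ H (empty_subset _) (hHG.trans hGN)).1, hT _ _ _ hG.2 (hD N H G hHG hGN).1⟩

theorem IsNull.union (hT : TransAx R) (hD : DominanceAx R) (hA : IsNull R A N)
    (hB : IsNull R B N) (hAN : A ⊆ N.S) (hBN : B ⊆ N.S) (hAB : Disjoint A B) :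
    IsNull R (A ∪ B) N := by
  have hdiff : (A ∪ B) \ A = B := by
    rw [union_sdiff_left, Finset.sdiff_eq_self_iff_disjoint]
    exact hAB.symm
  have hequiv : lequiv R (A ∪ B, N) (A, N) :=
    (hD N A (A ∪ B) subset_union_left (union_subset hAN hBN)).2.mpr (by rw [hdiff]; exact hB)
  exact hequiv.trans hT hA

end Null

theorem Rich.exists_disjoint_of_weights (hR : Rich) {n : ℕ} (w : Fin (n + 2) → ℝ)
    (hw : ∀ i, 0 < w i) (hsum : ∑ i, w i = 1) :
    ∃ (P : Measurement) (A B : Finset ℕ),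
      A ⊆ P.S ∧ B ⊆ P.S ∧ Disjoint A B ∧ P.W A = w 0 ∧ P.W B = w 1 := by
  obtain ⟨P, e, hS, hW⟩ := hR _ w hw hsum
  have hmem : ∀ i, {e i} ⊆ P.S := fun i => by simp [hS]
  exact ⟨P, {e 0}, {e 1}, hmem 0, hmem 1,
    disjoint_singleton.mpr (e.injective.ne Fin.zero_ne_one), hW 0, hW 1⟩

theorem Rich.exists_disjoint (hR : Rich) {a b : ℝ} (ha : 0 < a) (hb : 0 < b) (hab : a + b ≤ 1) :
    ∃ (P : Measurement) (A B : Finset ℕ),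
      A ⊆ P.S ∧ B ⊆ P.S ∧ Disjoint A B ∧ P.W A = a ∧ P.W B = b := by
  rcases hab.lt_or_eq with hlt | heq
  · exact hR.exists_disjoint_of_weights ![a, b, 1 - (a + b)]
      (by intro i; fin_cases i <;> simp <;> linarith) (by simp [Fin.sum_univ_three])
  · exact hR.exists_disjoint_of_weights ![a, b]
      (by intro i; fin_cases i <;> simp <;> linarith) (by simp [heq])

def NullBelow (R : LOrder) (x : ℝ) : Prop :=
  ∀ (N : Measurement) (G : Finset ℕ), G ⊆ N.S → N.W G ≤ x → IsNull R G N

section NullBelow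

variable {R : LOrder}

theorem nullBelow_zero (hE : EquivalenceAx R) : NullBelow R 0 := fun N _ hGN hle =>
  isNull_of_W_eq_zero hE hGN (le_antisymm hle (N.nonneg _))

theorem IsNull.nullBelow (hT : TransAx R) (hD : DominanceAx R) (hE : EquivalenceAx R)
    (hR : Rich) {M : Measurement} {E : Finset ℕ} (hnull : IsNull R E M) (hEM : E ⊆ M.S) :
    NullBelow R (M.W E) := by
  intro N G hGN hle
  rcases (N.nonneg G).eq_or_lt with h0 | hpos
  · exact isNull_of_W_eq_zero hE hGN h0.symm
  rcases hle.eq_or_lt with heq | hlt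
  · exact hnull.of_W_eq hT hE hEM hGN heq
  obtain ⟨P, A, B, hA, hB, hAB, hWA, hWB⟩ :=
    hR.exists_disjoint hpos (sub_pos.mpr hlt) (by linarith [M.W_le_one hEM])
  have hAB_null : IsNull R (A ∪ B) P :=
    hnull.of_W_eq hT hE hEM (union_subset hA hB) (by rw [P.addW A B hA hB hAB, hWA, hWB]; ring)
  exact (hAB_null.mono hT hD subset_union_left (union_subset hA hB)).of_W_eq hT hE hA hGN hWA.symm

theorem NullBelow.add (hT : TransAx R) (hD : DominanceAx R) (hE : EquivalenceAx R) (hR : Rich)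
    {x y : ℝ} (hx : NullBelow R x) (hy : NullBelow R y) : NullBelow R (x + y) := by
  intro N G hGN hle
  rcases le_or_gt (N.W G) x with hGx | hGx
  · exact hx N G hGN hGx
  rcases le_or_gt (N.W G) y with hGy | hGy
  · exact hy N G hGN hGy
  obtain ⟨P, A, B, hA, hB, hAB, hWA, hWB⟩ :=
    hR.exists_disjoint (a := x) (b := N.W G - x) (by linarith) (by linarith)
      (by linarith [N.W_le_one hGN])
  have hAB_null : IsNull R (A ∪ B) P :=
    (hx P A hA hWA.le).union hT hD (hy P B hB (by linarith)) hA hB hAB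
  exact hAB_null.of_W_eq hT hE (union_subset hA hB) hGN
    (by rw [P.addW A B hA hB hAB, hWA, hWB]; ring)

theorem NullBelow.natCast_mul (hT : TransAx R) (hD : DominanceAx R) (hE : EquivalenceAx R)
    (hR : Rich) {x : ℝ} (hx : NullBelow R x) (n : ℕ) : NullBelow R (n * x) := by
  induction n with
  | zero => simpa using nullBelow_zero hE
  | succ n ih => simpa [add_mul] using ih.add hT hD hE hR hx

end NullBelow

/-- Lemma 2: an event is null iff it has weight zero. -/
theorem stmt1 (R : LOrder) (hT : TransAx R) (hD : DominanceAx R)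
    (hS : SeparationAx R) (hE : EquivalenceAx R) (hR : Rich)
    (M : Measurement) (E : Finset ℕ) (hEM : E ⊆ M.S) :
    IsNull R E M ↔ M.W E = 0 := by
  refine ⟨fun hnull => ?_, isNull_of_W_eq_zero hE hEM⟩
  by_contra hne
  have hpos : 0 < M.W E := (M.nonneg E).lt_of_ne' hne
  obtain ⟨n, hn⟩ := exists_nat_ge (1 / M.W E)
  have hone : 1 ≤ n * M.W E := (div_le_iff₀ hpos).mp hn
  obtain ⟨F, N, hFN, hF⟩ := hS
  exact hF ((hnull.nullBelow hT hD hE hR hEM).natCast_mul hT hD hE hR n N F hFN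
    ((N.W_le_one hFN).trans hone))
end

section
/- Under the axioms of the quantum representation theorem, the union of two null events is null: if E and F are events of measurement M and both E|M and F|M are null, then (E ∪ F)|M is null. -/
/-- The union of two null events is null. -/
theorem stmt10 (R : LOrder) (hT : TransAx R) (hD : DominanceAx R)
    (hS : SeparationAx R) (hE : EquivalenceAx R) (hR : Rich)
    (M : Measurement) (E F : Finset ℕ) (hEM : E ⊆ M.S) (hFM : F ⊆ M.S)
    (hEnull : IsNull R E M) (hFnull : IsNull R F M) :
    IsNull R (E ∪ F) M := by
  have hEF : E ∪ F ⊆ M.S := Finset.union_subset hEM hFM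
  -- E \ F is null: subset of a null event
  have h1 : R (E, M) (E \ F, M) := (hD M (E \ F) E Finset.sdiff_subset hEM).1
  have h2 : R (E \ F, M) (∅, M) :=
    (hD M ∅ (E \ F) (Finset.empty_subset _) (Finset.sdiff_subset.trans hEM)).1
  have h3 : R (∅, M) (E \ F, M) := hT _ _ _ hEnull.2 h1
  have hEFnull : IsNull R (E \ F) M := ⟨h2, h3⟩
  -- (E ∪ F) \ F = E \ F is null, hence lequiv (E ∪ F, M) (F, M)
  have hdom := hD M F (E ∪ F) Finset.subset_union_right hEF
  have hsd : (E ∪ F) \ F = E \ F := Finset.union_sdiff_right E F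
  have hleq : lequiv R (E ∪ F, M) (F, M) := hdom.2.mpr (by rwa [hsd])
  exact ⟨hT _ _ _ hleq.1 hFnull.1, hT _ _ _ hFnull.2 hleq.2⟩
end
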